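/- Let Γ ⊆ X be G-convex with respect to an additive subgroup G ⊆ X (i.e., if x, x+nu ∈ Γ with u ∈ G and n ∈ ℕ, then x+iu ∈ Γ for 1 ≤ i ≤ n). Then for any f : Γ → Y, any u ∈ G^k and n ∈ ℕ^k, the sup norm of finite differences satisfies ‖Δ^k_{n*u} f‖_Γ ≤ n₁n₂⋯n_k · ‖Δ^k_u f‖_Γ, where ‖Δ^k_v f‖_Γ = sup over x with all needed points in Γ of ‖Δ^k_v f(x)‖. -/
import Mathlib


open Finset

/-- The finite difference of order `k`:
`Δ^k_u f (x) = ∑_{α ∈ {0,1}^k} (-1)^{k-|α|} f (x + α·u)`. -/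
def fdiff {X Y : Type*} [AddCommGroup X] [AddCommGroup Y] {k : ℕ}
    (u : Fin k → X) (f : X → Y) (x : X) : Y :=
  ∑ α : Fin k → Bool,
    ((-1 : ℤ) ^ (k - (Finset.univ.filter fun i => α i).card)) •
      f (x + ∑ i, if α i then u i else 0)

section Aux
variable {X Y : Type*} [AddCommGroup X] [AddCommGroup Y]

/-- The one-step difference operator `D_v f x = f (x + v) - f x`. -/
private def Dv (v : X) (f : X → Y) (x : X) : Y := f (x + v) - f x

private lemma card_filter_cons {k : ℕ} (b : Bool) (β : Fin k → Bool) :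
    (univ.filter fun i => (Fin.cons b β : Fin (k+1) → Bool) i = true).card
      = (if b then 1 else 0) + (univ.filter fun i => β i = true).card := by
  simp only [Finset.card_filter]
  rw [Fin.sum_univ_succ]
  simp [Fin.cons_zero, Fin.cons_succ]

private lemma fdiff_succ {k : ℕ} (u : Fin (k+1) → X) (f : X → Y) (x : X) :
    fdiff u f x = fdiff (fun i => u i.succ) (Dv (u 0) f) x := by
  unfold fdiff Dv
  rw [← (Fin.consEquiv (fun _ : Fin (k+1) => Bool)).sum_comp, Fintype.sum_prod_type,
    Fintype.sum_bool, ← Finset.sum_add_distrib]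
  refine Finset.sum_congr rfl fun β _ => ?_
  have hc : (univ.filter fun i => β i = true).card ≤ k := by
    simpa using Finset.card_filter_le univ (fun i => β i = true)
  set c := (univ.filter fun i => β i = true).card with hcdef
  simp only [Fin.consEquiv_apply, card_filter_cons, Fin.sum_univ_succ, Fin.cons_zero,
    Fin.cons_succ, if_true, if_false, Bool.false_eq_true, zero_add, ← hcdef]
  rw [show k + 1 - (1 + c) = k - c by omega, show k + 1 - c = (k - c) + 1 by omega,
    pow_succ, smul_sub]
  rw [show ∀ a b : Y, a + b = a - -b from fun a b => by abel]
  rw [mul_smul]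
  congr 2
  · exact congrArg f (by abel)
  · simp

private lemma Dv_nsmul (v : X) (f : X → Y) (n : ℕ) (x : X) :
    Dv (n • v) f x = ∑ j : Fin n, Dv v f (x + (j : ℕ) • v) := by
  induction n with
  | zero => simp [Dv]
  | succ n ih =>
      rw [Fin.sum_univ_castSucc]
      simp only [Fin.coe_castSucc, Fin.val_last, ← ih]
      simp only [Dv, succ_nsmul, ← add_assoc]
      abel

private lemma fdiff_sum {k : ℕ} (u : Fin k → X) {ι : Type*} (s : Finset ι)
    (g : ι → X → Y) (x : X) :
    fdiff u (fun y => ∑ j ∈ s, g j y) x = ∑ j ∈ s, fdiff u (g j) x := by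
  unfold fdiff
  simp only [Finset.smul_sum]
  rw [Finset.sum_comm]

private lemma fdiff_translate {k : ℕ} (u : Fin k → X) (f : X → Y) (a x : X) :
    fdiff u (fun y => f (y + a)) x = fdiff u f (x + a) := by
  unfold fdiff
  exact Finset.sum_congr rfl fun α _ => by rw [add_right_comm]

private lemma fdiff_zero (u : Fin 0 → X) (f : X → Y) (x : X) : fdiff u f x = f x := by
  rw [fdiff, Fintype.sum_unique]
  simp

/-- The key identity: `Δ^k_{n*u} f (x) = ∑_j Δ^k_u f (x + ∑ jᵢ uᵢ)`. -/
private lemma fdiff_smul_eq_sum {k : ℕ} (u : Fin k → X) (n : Fin k → ℕ) (f : X → Y) (x : X) :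
    fdiff (fun i => n i • u i) f x
      = ∑ j : (∀ i, Fin (n i)), fdiff u f (x + ∑ i, (j i : ℕ) • u i) := by
  induction k generalizing f x with
  | zero => simp [fdiff_zero]
  | succ k ih =>
      rw [fdiff_succ]
      have h1 : Dv (n 0 • u 0) f = fun y => ∑ j : Fin (n 0), Dv (u 0) f (y + (j : ℕ) • u 0) :=
        funext fun y => Dv_nsmul _ _ _ _
      rw [h1, fdiff_sum,
        ← (Fin.consEquiv (fun i : Fin (k+1) => Fin (n i))).sum_comp, Fintype.sum_prod_type]
      refine Finset.sum_congr rfl fun j0 _ => ?_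
      rw [fdiff_translate, ih]
      refine Finset.sum_congr rfl fun j' _ => ?_
      rw [← fdiff_succ]
      congr 1
      rw [Fin.sum_univ_succ]
      simp [Fin.cons_zero, Fin.cons_succ, add_assoc]

/-- `G`-convexity propagates: from the corners of the box one reaches every
lattice point of the box. -/
private lemma mem_of_piece (G : AddSubgroup X) (Γ : Set X)
    (hconv : ∀ x ∈ Γ, ∀ u ∈ G, ∀ n : ℕ, x + n • u ∈ Γ → ∀ i ≤ n, x + i • u ∈ Γ) :
    ∀ {k : ℕ} (u : Fin k → X), (∀ i, u i ∈ G) → ∀ (n m : Fin k → ℕ), (∀ i, m i ≤ n i) →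
    ∀ x ∈ Γ, (∀ α : Fin k → Bool, x + ∑ i, (if α i then n i • u i else 0) ∈ Γ) →
      x + ∑ i, m i • u i ∈ Γ := by
  intro k
  induction k with
  | zero => intro u hu n m hm x hx hα; simpa using hx
  | succ k ih =>
      intro u hu n m hm x hx hα
      have step1 : ∀ α' : Fin k → Bool,
          (x + ∑ i : Fin k, (if α' i then n i.succ • u i.succ else 0)) + m 0 • u 0 ∈ Γ := by
        intro α'
        have hy : x + ∑ i : Fin k, (if α' i then n i.succ • u i.succ else 0) ∈ Γ := by
          have := hα (Fin.cons false α')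
          simpa [Fin.sum_univ_succ, Fin.cons_zero, Fin.cons_succ] using this
        have hyn : (x + ∑ i : Fin k, (if α' i then n i.succ • u i.succ else 0))
            + n 0 • u 0 ∈ Γ := by
          have := hα (Fin.cons true α')
          rw [Fin.sum_univ_succ] at this
          simpa [Fin.cons_zero, Fin.cons_succ, ← add_assoc, add_comm, add_left_comm] using this
        exact hconv _ hy (u 0) (hu 0) (n 0) hyn (m 0) (hm 0)
      have hx' : x + m 0 • u 0 ∈ Γ := by
        have := step1 (fun _ => false)
        simpa using this
      have hα' : ∀ α' : Fin k → Bool,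
          (x + m 0 • u 0) + ∑ i : Fin k, (if α' i then n i.succ • u i.succ else 0) ∈ Γ := by
        intro α'
        have := step1 α'
        rwa [add_right_comm] at this
      have := ih (fun i => u i.succ) (fun i => hu i.succ) (fun i => n i.succ)
        (fun i => m i.succ) (fun i => hm i.succ) _ hx' hα'
      rw [Fin.sum_univ_succ, ← add_assoc]
      exact this

end Aux

/-- Monotonicity of finite-difference norms on a `G`-convex domain:
`‖Δ^k_{n*u} f‖_Γ ≤ n₁⋯n_k ‖Δ^k_u f‖_Γ`. -/
theorem fdiff_sup_monotone {X Y : Type*}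
    [NormedAddCommGroup X] [NormedSpace ℝ X] [NormedAddCommGroup Y] [NormedSpace ℝ Y]
    [CompleteSpace Y] (G : AddSubgroup X) (Γ : Set X)
    (hconv : ∀ x ∈ Γ, ∀ u ∈ G, ∀ n : ℕ, x + n • u ∈ Γ → ∀ i ≤ n, x + i • u ∈ Γ)
    {k : ℕ} (f : X → Y) (u : Fin k → X) (hu : ∀ i, u i ∈ G) (n : Fin k → ℕ) :
    (⨆ x ∈ {x ∈ Γ | ∀ α : Fin k → Bool,
        x + ∑ i, (if α i then n i • u i else 0) ∈ Γ},
      (‖fdiff (fun i => n i • u i) f x‖₊ : ENNReal)) ≤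
      (∏ i, (n i : ENNReal)) *
        ⨆ x ∈ {x ∈ Γ | ∀ α : Fin k → Bool,
            x + ∑ i, (if α i then u i else 0) ∈ Γ},
          (‖fdiff u f x‖₊ : ENNReal) := by
  set S1 : Set X := {x ∈ Γ | ∀ α : Fin k → Bool, x + ∑ i, (if α i then u i else 0) ∈ Γ}
  set M : ENNReal := ⨆ x ∈ S1, (‖fdiff u f x‖₊ : ENNReal) with hM
  refine iSup₂_le fun x hx => ?_
  obtain ⟨hxΓ, hxα⟩ := hx
  -- each shifted point lies in S1
  have hmem : ∀ j : (∀ i, Fin (n i)), (x + ∑ i, ((j i : ℕ)) • u i) ∈ S1 := by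
    intro j
    constructor
    · exact mem_of_piece G Γ hconv u hu n (fun i => (j i : ℕ))
        (fun i => (j i).isLt.le) x hxΓ hxα
    · intro α
      have key : (x + ∑ i, ((j i : ℕ)) • u i) + ∑ i, (if α i then u i else 0)
          = x + ∑ i, ((j i : ℕ) + if α i then 1 else 0) • u i := by
        rw [add_assoc, ← Finset.sum_add_distrib]
        congr 1
        refine Finset.sum_congr rfl fun i _ => ?_
        by_cases h : α i <;> simp [h, add_smul]
      rw [key]
      exact mem_of_piece G Γ hconv u hu n (fun i => (j i : ℕ) + if α i then 1 else 0)
        (fun i => by by_cases h : α i <;> simp only [h, Bool.false_eq_true, if_true, if_false] <;> omega) x hxΓ hxα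
  calc (‖fdiff (fun i => n i • u i) f x‖₊ : ENNReal)
      = ‖∑ j : (∀ i, Fin (n i)), fdiff u f (x + ∑ i, ((j i : ℕ)) • u i)‖₊ := by
        rw [fdiff_smul_eq_sum]
    _ ≤ ∑ j : (∀ i, Fin (n i)), (‖fdiff u f (x + ∑ i, ((j i : ℕ)) • u i)‖₊ : ENNReal) := by
        rw [← ENNReal.coe_finset_sum]
        exact_mod_cast nnnorm_sum_le _ _
    _ ≤ ∑ _j : (∀ i, Fin (n i)), M := by
        refine Finset.sum_le_sum fun j _ => ?_
        exact le_iSup₂ (f := fun y (_ : y ∈ S1) => (‖fdiff u f y‖₊ : ENNReal)) _ (hmem j)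
    _ = (∏ i, (n i : ENNReal)) * M := by
        rw [Finset.sum_const, Finset.card_univ, Fintype.card_pi]
        simp [Fintype.card_fin, nsmul_eq_mul, Nat.cast_prod]
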